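/- Let λ, κ ∈ K, (A, μ, α, β) a BiHom-commutative BiHom-associative algebra and 𝔇 a λ-(id,id)-derivation (i.e. 𝔇(ab)=a𝔇(b)+𝔇(a)b+λab) commuting with α and β. Define a * b := a𝔇(b) + κab. Then (A, μ, *, α, β) is a BiHom-Novikov-Poisson algebra; in particular the compatibilities (a·β(b)) * αβ(c) = (a * β(c))·αβ(b) and α(a)·(b * c) = (a·b) * β(c) hold, and (β(a)*α(b))·β(c) − αβ(a)*(α(b)·c) is symmetric in a and b. -/
import Mathlib


/-- (Left) BiHom-pre-Lie algebra `(A, c, α, β)`. -/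
def BHPreLie {K A : Type*} [Field K] [AddCommGroup A] [Module K A]
    (c : A →ₗ[K] A →ₗ[K] A) (α β : A →ₗ[K] A) : Prop :=
  (∀ a, α (β a) = β (α a)) ∧
  (∀ a b, α (c a b) = c (α a) (α b)) ∧
  (∀ a b, β (c a b) = c (β a) (β b)) ∧
  (∀ a b x, c (α (β a)) (c (α b) x) - c (c (β a) (α b)) (β x) =
    c (α (β b)) (c (α a) x) - c (c (β b) (α a)) (β x))

/-- BiHom-Novikov algebra: BiHom-pre-Lie plus `(a*β(b))*αβ(c) = (a*β(c))*αβ(b)`. -/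
def BHNovikov {K A : Type*} [Field K] [AddCommGroup A] [Module K A]
    (c : A →ₗ[K] A →ₗ[K] A) (α β : A →ₗ[K] A) : Prop :=
  BHPreLie c α β ∧
  (∀ a b x, c (c a (β b)) (α (β x)) = c (c a (β x)) (α (β b)))

/-- BiHom-pre-Lie bimodule over a BiHom-pre-Lie algebra `(A, c, α, β)`. -/
def BHPreLieBimod {K A M : Type*} [Field K] [AddCommGroup A] [Module K A]
    [AddCommGroup M] [Module K M]
    (c : A →ₗ[K] A →ₗ[K] A) (α β : A →ₗ[K] A)
    (cl : A →ₗ[K] M →ₗ[K] M) (cr : M →ₗ[K] A →ₗ[K] M)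
    (αM βM : M →ₗ[K] M) : Prop :=
  (∀ m, αM (βM m) = βM (αM m)) ∧
  (∀ a m, αM (cl a m) = cl (α a) (αM m)) ∧
  (∀ m a, αM (cr m a) = cr (αM m) (α a)) ∧
  (∀ a m, βM (cl a m) = cl (β a) (βM m)) ∧
  (∀ m a, βM (cr m a) = cr (βM m) (β a)) ∧
  (∀ a b m, cl (α (β a)) (cl (α b) m) - cl (c (β a) (α b)) (βM m) =
    cl (α (β b)) (cl (α a) m) - cl (c (β b) (α a)) (βM m)) ∧
  (∀ a m x, cl (α (β a)) (cr (αM m) x) - cr (cl (β a) (αM m)) (β x) =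
    cr (αM (βM m)) (c (α a) x) - cr (cr (βM m) (α a)) (β x))

/-- for a BiHom-commutative BiHom-associative algebra `(A, μ, α, β)` and a
`lam`-`(id,id)`-derivation `D` commuting with `α, β`, the product
`a * b = a·D(b) + κ·(a·b)` makes `(A, μ, *, α, β)` a BiHom-Novikov-Poisson algebra. -/
theorem stmt13 (K A : Type*) [Field K] [AddCommGroup A] [Module K A] (lam κ : K)
    (μ : A →ₗ[K] A →ₗ[K] A) (α β D : A →ₗ[K] A)
    (hαβ : ∀ a, α (β a) = β (α a))
    (hαmul : ∀ a b, α (μ a b) = μ (α a) (α b))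
    (hβmul : ∀ a b, β (μ a b) = μ (β a) (β b))
    (hassoc : ∀ a b c, μ (α a) (μ b c) = μ (μ a b) (β c))
    (hcommut : ∀ a b, μ (β a) (α b) = μ (β b) (α a))
    (hD : ∀ a b, D (μ a b) = μ a (D b) + μ (D a) b + lam • μ a b)
    (hDα : ∀ a, D (α a) = α (D a)) (hDβ : ∀ a, D (β a) = β (D a))
    (star : A →ₗ[K] A →ₗ[K] A)
    (hstar : ∀ a b, star a b = μ a (D b) + κ • μ a b) :
    BHNovikov star α β ∧
    (∀ a b c, μ (star (β a) (α b)) (β c) - star (α (β a)) (μ (α b) c) =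
      μ (star (β b) (α a)) (β c) - star (α (β b)) (μ (α a) c)) ∧
    (∀ a b c, star (μ a (β b)) (α (β c)) = μ (star a (β c)) (α (β b))) ∧
    (∀ a b c, μ (α a) (star b c) = star (μ a b) (β c)) := by
  -- key lemma: (a·β b)·αβ c = (a·β c)·αβ b
  have L1 : ∀ a b c, μ (μ a (β b)) (α (β c)) = μ (μ a (β c)) (α (β b)) := by
    intro a b c
    rw [hαβ, ← hassoc, hcommut, hassoc, ← hαβ]
  unfold BHNovikov BHPreLie
  refine ⟨⟨⟨hαβ, ?_, ?_, ?_⟩, ?_⟩, ?_, ?_, ?_⟩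
  · -- α multiplicative over star
    intro a b
    simp only [hstar, map_add, map_smul, hαmul, hDα]
  · -- β multiplicative over star
    intro a b
    simp only [hstar, map_add, map_smul, hβmul, hDβ]
  · -- pre-Lie identity
    have E2 : ∀ a b x, star (α (β a)) (star (α b) x) - star (star (β a) (α b)) (β x)
        = μ (μ (β a) (α b)) (β (D (D x))) + lam • μ (μ (β a) (α b)) (β (D x))
          + κ • μ (μ (β a) (α b)) (β (D x)) + (κ * lam) • μ (μ (β a) (α b)) (β x) := by
      intro a b x
      simp only [hstar, hD, hDα, hDβ, map_add, map_smul, LinearMap.add_apply,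
        LinearMap.smul_apply, hassoc, smul_add, mul_smul]
      module
    intro a b x
    rw [E2 a b x, E2 b a x, hcommut a b]
  · -- Novikov identity
    intro a b x
    simp only [hstar, hD, hDα, hDβ, map_add, map_smul, LinearMap.add_apply,
      LinearMap.smul_apply, smul_add, mul_smul]
    rw [L1 a (D b) (D x), L1 a b (D x), L1 a (D b) x, L1 a b x]
    module
  · -- compatibility 1
    have E1 : ∀ a b c, μ (star (β a) (α b)) (β c) - star (α (β a)) (μ (α b) c)
        = -(μ (μ (β a) (α b)) (β (D c))) - lam • μ (μ (β a) (α b)) (β c) := by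
      intro a b c
      simp only [hstar, hD, hDα, hDβ, map_add, map_smul, LinearMap.add_apply,
        LinearMap.smul_apply, hassoc, smul_add, mul_smul]
      module
    intro a b c
    rw [E1 a b c, E1 b a c, hcommut a b]
  · -- compatibility 2
    intro a b c
    simp only [hstar, hD, hDα, hDβ, map_add, map_smul, LinearMap.add_apply,
      LinearMap.smul_apply]
    rw [L1 a b (D c), L1 a b c]
  · -- compatibility 3
    intro a b c
    simp only [hstar, hDβ, map_add, map_smul, LinearMap.add_apply,
      LinearMap.smul_apply, hassoc]
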